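/- arXiv:2509.04027 — 2 statements merged into one kernel-verified Lean document; each statement's English description precedes it below -/
import Mathlib

section
/- Let Ω be a probability space, let Z and W be finite types, let μ be a probability measure on Z, let S = (S_1, …, S_n) : Ω → Z^n be a random sample whose law is the n-fold product μ^n, and let W : Ω → 𝒲 be a random hypothesis (possibly depending on S). Let ℓ : 𝒲 × Z → ℝ satisfy 0 ≤ ℓ(w, z) ≤ C_max for all w, z. Define the mutual information I(W; S) as the Kullback–Leibler divergence of the joint law of (W, S) from the product of the marginal laws of W and of S. Then |E[ ∫ ℓ(W, z) dμ(z) − (1/n)∑_{i=1}^n ℓ(W, S_i) ]| ≤ sqrt( C_max^2 · I(W; S) / (2n) ). -/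
/-!
By the Donsker–Varadhan inequality, for every `t` the expected gap `E` under the joint law `Q`
of `(W, S)` satisfies `t * E ≤ KL(Q ‖ P) + log E_P[exp (t * gap)]`, where `P` is the product of
the marginal laws. Under `P` the sample is `μ^n` independently of the hypothesis, so by
Hoeffding's lemma the gap is sub-Gaussian with variance proxy `C_max² / (4n)`. The resulting
quadratic inequality in `t` forces `E² ≤ C_max² · I(W; S) / (2n)`. Finiteness of the spaces gives
`Q ≪ P` and all the integrability needed.
-/

open MeasureTheory

/-- The Kullback–Leibler divergence `KL(Q ‖ P) = ∫ log(dQ/dP) dQ` (as a real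
number), expressed via the Radon–Nikodym derivative. -/
noncomputable def klDivReal {H : Type*} [MeasurableSpace H]
    (Q P : Measure H) : ℝ :=
  ∫ h, Real.log ((Q.rnDeriv P h).toReal) ∂Q

/-- The mutual information `I(X; Y)` of two random variables: the KL divergence
of the joint law of `(X, Y)` from the product of the marginal laws. -/
noncomputable def mutualInfoReal {Ω α β : Type*} [MeasurableSpace Ω]
    [MeasurableSpace α] [MeasurableSpace β]
    (ℙ : Measure Ω) (X : Ω → α) (Y : Ω → β) : ℝ :=
  klDivReal (Measure.map (fun ω => (X ω, Y ω)) ℙ)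
    ((Measure.map X ℙ).prod (Measure.map Y ℙ))

namespace MeasureTheory

section DonskerVaradhan

open Real

variable {α : Type*} [MeasurableSpace α] {Q P : Measure α} {f : α → ℝ}

lemma integral_le_integral_llr_add_log_integral_exp [IsProbabilityMeasure Q]
    [IsProbabilityMeasure P] (hQP : Q ≪ P) (hfQ : Integrable f Q)
    (hfP : Integrable (fun x ↦ exp (f x)) P) (hllr : Integrable (llr Q P) Q) :
    ∫ x, f x ∂Q ≤ ∫ x, llr Q P x ∂Q + log (∫ x, exp (f x) ∂P) := by
  have : IsProbabilityMeasure (P.tilted f) := isProbabilityMeasure_tilted hfP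
  have hQPf : Q ≪ P.tilted f := hQP.trans (absolutelyContinuous_tilted hfP)
  -- Gibbs' inequality against the tilted measure `P.tilted f` is exactly the claim.
  have gibbs := InformationTheory.integral_llr_add_sub_measure_univ_nonneg hQPf
    (integrable_llr_tilted_right hQP hfQ hllr hfP)
  rw [integral_llr_tilted_right hQP hfQ hfP hllr] at gibbs
  simp only [probReal_univ] at gibbs
  linarith

end DonskerVaradhan

lemma Measure.absolutelyContinuous_prod_map_fst_map_snd {α β : Type*} [MeasurableSpace α]
    [MeasurableSpace β] [Countable α] [Countable β] [MeasurableSingletonClass α]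
    [MeasurableSingletonClass β] (Q : Measure (α × β)) [IsFiniteMeasure Q] :
    Q ≪ (Q.map Prod.fst).prod (Q.map Prod.snd) := by
  refine Measure.AbsolutelyContinuous.mk fun s _ hs ↦ ?_
  rw [← Set.biUnion_of_singleton s]
  refine (measure_biUnion_null_iff s.to_countable).2 fun ⟨a, b⟩ hab ↦ ?_
  have h := measure_mono_null (Set.singleton_subset_iff.2 hab) hs
  rw [← Set.singleton_prod_singleton, Measure.prod_prod, mul_eq_zero,
    Measure.map_apply measurable_fst (measurableSet_singleton a),
    Measure.map_apply measurable_snd (measurableSet_singleton b)] at h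
  rcases h with h | h <;> exact measure_mono_null (fun x hx ↦ by simp_all) h

end MeasureTheory

lemma sq_le_of_forall_mul_le_add_sq {E K c : ℝ} (h : ∀ t, t * E ≤ K + c * t ^ 2 / 2) :
    E ^ 2 ≤ 2 * c * K := by
  have := discrim_le_zero (a := c / 2) (b := -E) (c := K) fun t ↦ by linarith [h t]
  rw [discrim] at this
  linarith

namespace ProbabilityTheory

open MeasureTheory Real
open scoped NNReal

lemma HasSubgaussianMGF.abs_integral_le_sqrt_integral_llr {α : Type*} [MeasurableSpace α]
    {Q P : Measure α} [IsProbabilityMeasure Q] [IsProbabilityMeasure P] {X : α → ℝ} {c : ℝ≥0}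
    (hX : HasSubgaussianMGF X c P) (hQP : Q ≪ P) (hXQ : Integrable X Q)
    (hllr : Integrable (llr Q P) Q) :
    |∫ x, X x ∂Q| ≤ √(2 * c * ∫ x, llr Q P x ∂Q) := by
  refine abs_le_sqrt (sq_le_of_forall_mul_le_add_sq fun t ↦ ?_)
  calc t * ∫ x, X x ∂Q = ∫ x, t * X x ∂Q := (integral_const_mul t _).symm
    _ ≤ ∫ x, llr Q P x ∂Q + cgf X P t :=
      integral_le_integral_llr_add_log_integral_exp hQP (hXQ.const_mul t)
        (hX.integrable_exp_mul t) hllr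
    _ ≤ ∫ x, llr Q P x ∂Q + c * t ^ 2 / 2 := by gcongr; exact hX.cgf_le t

lemma hasSubgaussianMGF_prod_of_forall {α β : Type*} [MeasurableSpace α] [MeasurableSpace β]
    {ρ : Measure α} {ν : Measure β} [IsProbabilityMeasure ρ] [SFinite ν] {g : α × β → ℝ}
    {c : ℝ≥0} (hg : AEStronglyMeasurable g (ρ.prod ν))
    (h : ∀ a, HasSubgaussianMGF (fun b ↦ g (a, b)) c ν) :
    HasSubgaussianMGF g c (ρ.prod ν) := by
  have h_int (t : ℝ) : Integrable (fun x ↦ exp (t * g x)) (ρ.prod ν) := by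
    have hm : AEStronglyMeasurable (fun x ↦ exp (t * g x)) (ρ.prod ν) :=
      continuous_exp.comp_aestronglyMeasurable (hg.const_mul t)
    refine (integrable_prod_iff hm).2 ⟨ae_of_all _ fun a ↦ (h a).integrable_exp_mul t, ?_⟩
    refine Integrable.mono' (integrable_const (exp (c * t ^ 2 / 2)))
      hm.norm.integral_prod_right' (ae_of_all _ fun a ↦ ?_)
    simp only [Real.norm_eq_abs, abs_exp]
    exact (abs_of_nonneg (mgf_nonneg (X := fun b ↦ g (a, b)))).trans_le ((h a).mgf_le t)
  refine ⟨h_int, fun t ↦ ?_⟩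
  calc mgf g (ρ.prod ν) t = ∫ a, mgf (fun b ↦ g (a, b)) ν t ∂ρ := integral_prod _ (h_int t)
    _ ≤ ∫ _, exp (c * t ^ 2 / 2) ∂ρ :=
      integral_mono (h_int t).integral_prod_left (integrable_const _) fun a ↦ (h a).mgf_le t
    _ = exp (c * t ^ 2 / 2) := by simp

lemma hasSubgaussianMGF_integral_sub_sampleMean {Z : Type*} [MeasurableSpace Z] {μ : Measure Z}
    [IsProbabilityMeasure μ] {n : ℕ} (hn : n ≠ 0) {f : Z → ℝ} (hf : AEMeasurable f μ) {a b : ℝ}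
    (hab : ∀ᵐ z ∂μ, f z ∈ Set.Icc a b) :
    HasSubgaussianMGF (fun s : Fin n → Z ↦ ∫ z, f z ∂μ - (1 / n) * ∑ i, f (s i))
      ((‖b - a‖₊ / 2) ^ 2 / n) (Measure.pi fun _ ↦ μ) := by
  have h_centered (i : Fin n) : HasSubgaussianMGF (fun s : Fin n → Z ↦ f (s i) - ∫ z, f z ∂μ)
      ((‖b - a‖₊ / 2) ^ 2) (Measure.pi fun _ ↦ μ) := by
    refine HasSubgaussianMGF.of_map (X := fun z ↦ f z - ∫ z, f z ∂μ)
      (measurable_pi_apply i).aemeasurable ?_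
    rw [(measurePreserving_eval (fun _ ↦ μ) i).map_eq]
    exact hasSubgaussianMGF_of_mem_Icc hf hab
  have h_indep := iIndepFun_pi (μ := fun _ : Fin n ↦ μ)
    (X := fun _ z ↦ f z - ∫ z, f z ∂μ) fun _ ↦ hf.sub_const _
  have h_mean := (HasSubgaussianMGF.sum_of_iIndepFun h_indep (s := Finset.univ)
    fun i _ ↦ h_centered i).const_mul (-(1 / n))
  have h_param : (⟨(-(1 / n : ℝ)) ^ 2, sq_nonneg _⟩ : ℝ≥0) * ∑ _i : Fin n, (‖b - a‖₊ / 2) ^ 2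
      = ((‖b - a‖₊ / 2) ^ 2 / n : ℝ≥0) := by
    apply NNReal.eq
    change (-(1 / n : ℝ)) ^ 2 * ((∑ _i : Fin n, (‖b - a‖₊ / 2) ^ 2 : ℝ≥0) : ℝ) = _
    push_cast
    rw [Finset.sum_const, Finset.card_univ, Fintype.card_fin, nsmul_eq_mul]
    field_simp
  refine (h_param ▸ h_mean).congr (ae_of_all _ fun s ↦ ?_)
  simp only [Finset.sum_sub_distrib, Finset.sum_const, Finset.card_univ, Fintype.card_fin,
    nsmul_eq_mul]
  field_simp
  ring

end ProbabilityTheory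

/-- **Information-theoretic generalization bound (Xu–Raginsky).**
For a random hypothesis `W` learned from an i.i.d. sample `S ~ μ^n` over a
finite data space, and a loss `ℓ` with values in `[0, C_max]`, the expected
generalization gap is bounded by `sqrt(C_max² · I(W; S) / (2n))`. -/
theorem xu_raginsky_generalization_bound
    {Ω : Type*} [MeasurableSpace Ω] (ℙ : Measure Ω) [IsProbabilityMeasure ℙ]
    {Z 𝒲 : Type*} [Fintype Z] [Fintype 𝒲]
    [MeasurableSpace Z] [MeasurableSingletonClass Z]
    [MeasurableSpace 𝒲] [MeasurableSingletonClass 𝒲]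
    (μ : Measure Z) [IsProbabilityMeasure μ]
    (n : ℕ) (hn : 0 < n)
    (S : Ω → (Fin n → Z)) (hS : Measurable S)
    (hlaw : Measure.map S ℙ = Measure.pi fun _ : Fin n => μ)
    (W : Ω → 𝒲) (hW : Measurable W)
    (ℓ : 𝒲 → Z → ℝ) (Cmax : ℝ) (hℓ : ∀ w z, ℓ w z ∈ Set.Icc (0 : ℝ) Cmax) :
    |∫ ω, ((∫ z, ℓ (W ω) z ∂μ) - (1 / n) * ∑ i, ℓ (W ω) (S ω i)) ∂ℙ| ≤
      Real.sqrt (Cmax ^ 2 * mutualInfoReal ℙ W S / (2 * n)) := by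
  have hWS : Measurable fun ω ↦ (W ω, S ω) := hW.prodMk hS
  set Q := ℙ.map fun ω ↦ (W ω, S ω)
  have : IsProbabilityMeasure Q := Measure.isProbabilityMeasure_map hWS.aemeasurable
  have : IsProbabilityMeasure (ℙ.map W) := Measure.isProbabilityMeasure_map hW.aemeasurable
  have : IsProbabilityMeasure (ℙ.map S) := Measure.isProbabilityMeasure_map hS.aemeasurable
  have hQ_fst : Q.map Prod.fst = ℙ.map W := Measure.map_map measurable_fst hWS
  have hQ_snd : Q.map Prod.snd = ℙ.map S := Measure.map_map measurable_snd hWS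
  have hQP : Q ≪ (ℙ.map W).prod (ℙ.map S) :=
    hQ_fst ▸ hQ_snd ▸ Measure.absolutelyContinuous_prod_map_fst_map_snd Q
  have h_gap : ProbabilityTheory.HasSubgaussianMGF
      (fun x : 𝒲 × (Fin n → Z) ↦ ∫ z, ℓ x.1 z ∂μ - 1 / n * ∑ i, ℓ x.1 (x.2 i))
      ((‖Cmax - 0‖₊ / 2) ^ 2 / n) ((ℙ.map W).prod (ℙ.map S)) := by
    rw [hlaw]
    exact ProbabilityTheory.hasSubgaussianMGF_prod_of_forall
      (measurable_of_finite _).aestronglyMeasurable fun w ↦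
        ProbabilityTheory.hasSubgaussianMGF_integral_sub_sampleMean hn.ne'
          (measurable_of_finite _).aemeasurable (ae_of_all _ (hℓ w))
  have h_bound := h_gap.abs_integral_le_sqrt_integral_llr hQP .of_finite .of_finite
  rw [integral_map hWS.aemeasurable (measurable_of_finite _).aestronglyMeasurable] at h_bound
  refine h_bound.trans_eq (congrArg Real.sqrt ?_)
  -- `mutualInfoReal ℙ W S` is by definition the integral of `llr Q ((ℙ.map W).prod (ℙ.map S))`.
  change _ = Cmax ^ 2 * (∫ x, llr Q _ x ∂Q) / (2 * n)
  push_cast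
  rw [sub_zero, Real.norm_eq_abs, div_pow, sq_abs]
  field_simp
end

section
/- Let Ω be a probability space, let Z be a finite type with probability measure μ, let 𝒜 be a finite alphabet and m a positive integer, and set 𝒲 = 𝒜^m (token sequences of length m). Let S = (S_1, …, S_n) : Ω → Z^n be a random sample with law μ^n, let W : Ω → 𝒲 be a random policy output (possibly depending on S), and let ℓ : 𝒲 × Z → ℝ satisfy 0 ≤ ℓ(w, z) ≤ C_max. Then the expected reasoning generalization error satisfies |E[ ∫ ℓ(W, z) dμ(z) − (1/n)∑_{i=1}^n ℓ(W, S_i) ]| ≤ sqrt( C_max^2 · m · log|𝒜| / (2n) ). -/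
open MeasureTheory

/-!
For a fixed chain of thought `w`, the gap `R(w) - R̂ₙ(w)` under `S ~ μⁿ` is an average of `n`
independent variables with range `C_max`, hence sub-Gaussian with variance proxy
`σ² = C_max² / (4n)` by Hoeffding's lemma. The output `W` is one of the `|𝒜|^m` chains of thought, so its gap is at most
the maximum of these `|𝒜|^m` sub-Gaussian variables, whatever the dependence of `W` on `S`.
Jensen's inequality and a union bound on moment generating functions give
`t · E[max] ≤ log |𝒜|^m + σ² t² / 2` for all `t`, and optimizing in `t` yields
`E[max] ≤ √(2 σ² m log |𝒜|)`. This is the bound that `I(W; S) ≤ H(W) ≤ m log |𝒜|` gives in the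
Xu–Raginsky inequality, obtained here without mutual information.
-/

section

open ProbabilityTheory Real
open scoped NNReal

lemma le_sqrt_of_forall_mul_le {x a b : ℝ} (ha : 0 ≤ a) (hb : 0 ≤ b)
    (h : ∀ t > 0, t * x ≤ a + b * t ^ 2) : x ≤ √(4 * a * b) := by
  rcases le_or_gt x 0 with hx | hx
  · exact hx.trans (sqrt_nonneg _)
  rcases hb.eq_or_lt with rfl | hb
  · have := h ((a + 1) / x) (by positivity)
    rw [div_mul_cancel₀ _ hx.ne'] at this
    linarith
  · rw [le_sqrt hx.le (by positivity)]
    have := h (x / (2 * b)) (by positivity)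
    field_simp at this
    nlinarith

theorem hasSubgaussianMGF_integral_sub_empiricalMean {Z : Type*} [MeasurableSpace Z]
    {μ : Measure Z} [IsProbabilityMeasure μ] {n : ℕ} (hn : 0 < n) {f : Z → ℝ} {a b : ℝ}
    (hf : AEMeasurable f μ) (hab : ∀ᵐ z ∂μ, f z ∈ Set.Icc a b) :
    HasSubgaussianMGF (fun s : Fin n → Z ↦ (∫ z, f z ∂μ) - (1 / n) * ∑ i, f (s i))
      ((‖b - a‖₊ / 2) ^ 2 / n) (Measure.pi fun _ ↦ μ) := by
  -- With `g = -f / n`, the gap is exactly the sum of the centred coordinates `g (s i) - μ[g]`.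
  set g : Z → ℝ := fun z ↦ -f z / n
  have hg : AEMeasurable g μ := hf.neg.div_const _
  have hcoord : ∀ i : Fin n, HasSubgaussianMGF (fun s : Fin n → Z ↦ g (s i) - μ[g])
      ((‖-a / n - -b / n‖₊ / 2) ^ 2) (Measure.pi fun _ ↦ μ) := fun i ↦
    HasSubgaussianMGF.of_map (Y := Function.eval i) (measurable_pi_apply i).aemeasurable
      (by
        rw [(measurePreserving_eval (fun _ : Fin n ↦ μ) i).map_eq]
        refine hasSubgaussianMGF_of_mem_Icc (a := -b / n) (b := -a / n) hg (hab.mono fun z hz ↦ ?_)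
        have hn' : (0 : ℝ) < n := by exact_mod_cast hn
        exact ⟨div_le_div_of_nonneg_right (neg_le_neg hz.2) hn'.le,
          div_le_div_of_nonneg_right (neg_le_neg hz.1) hn'.le⟩)
  have hsum := HasSubgaussianMGF.sum_of_iIndepFun
    (iIndepFun_pi (X := fun _ z ↦ g z - μ[g]) fun _ ↦ hg.sub_const _)
    (s := Finset.univ) fun i _ ↦ hcoord i
  refine (congrArg (HasSubgaussianMGF _ · _) ?_).mp (hsum.congr (ae_of_all _ fun s ↦ ?_))
  · rw [← sub_div, neg_sub_neg, nnnorm_div, Real.nnnorm_natCast]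
    simp only [Finset.sum_const, Finset.card_univ, Fintype.card_fin, nsmul_eq_mul]
    field_simp
  · simp only [g, Finset.sum_sub_distrib, Finset.sum_const, Finset.card_univ, Fintype.card_fin,
      nsmul_eq_mul, integral_div, integral_neg, neg_div, Finset.sum_neg_distrib, ← Finset.sum_div]
    field_simp
    ring

variable {Ω ι : Type*} [MeasurableSpace Ω] {μ : Measure Ω}

lemma integrable_finset_sup' {s : Finset ι} (hs : s.Nonempty) {X : ι → Ω → ℝ}
    (hX : ∀ i ∈ s, Integrable (X i) μ) : Integrable (fun ω ↦ s.sup' hs (X · ω)) μ := by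
  simp_rw [← Finset.sup'_apply]
  exact Finset.sup'_induction hs X (p := (Integrable · μ)) (fun _ hf _ hg ↦ hf.sup hg) hX

variable [IsProbabilityMeasure μ] [Fintype ι] {X : ι → Ω → ℝ} {c : ℝ≥0}

theorem mul_integral_sup'_le_of_hasSubgaussianMGF [Nonempty ι]
    (hX : ∀ i, HasSubgaussianMGF (X i) c μ) (t : ℝ) :
    t * ∫ ω, Finset.univ.sup' Finset.univ_nonempty (X · ω) ∂μ
      ≤ log (Fintype.card ι) + c / 2 * t ^ 2 := by
  set M := fun ω ↦ Finset.univ.sup' Finset.univ_nonempty (X · ω)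
  have hM : Integrable M μ :=
    integrable_finset_sup' _ fun i _ ↦ (hX i).integrable
  have hexp_le : ∀ ω, exp (t * M ω) ≤ ∑ i, exp (t * X i ω) := fun ω ↦ by
    obtain ⟨i, -, hi⟩ := Finset.exists_mem_eq_sup' Finset.univ_nonempty (X · ω)
    rw [show M ω = X i ω from hi]
    exact Finset.single_le_sum (f := fun i ↦ exp (t * X i ω)) (fun _ _ ↦ (exp_pos _).le)
      (Finset.mem_univ i)
  have hsum : Integrable (fun ω ↦ ∑ i, exp (t * X i ω)) μ :=
    integrable_finsetSum _ fun i _ ↦ (hX i).integrable_exp_mul t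
  have hexpM : Integrable (fun ω ↦ exp (t * M ω)) μ :=
    hsum.mono' (hM.const_mul t).aestronglyMeasurable.aemeasurable.exp.aestronglyMeasurable
      (ae_of_all _ fun ω ↦ by simpa [abs_of_pos (exp_pos _)] using hexp_le ω)
  have hjensen : exp (t * ∫ ω, M ω ∂μ) ≤ ∫ ω, exp (t * M ω) ∂μ := by
    rw [← integral_const_mul]
    exact convexOn_exp.map_integral_le continuousOn_exp isClosed_univ (ae_of_all _ fun _ ↦ trivial)
      (hM.const_mul t) hexpM
  have hmgf : ∫ ω, exp (t * M ω) ∂μ ≤ Fintype.card ι * exp (c / 2 * t ^ 2) :=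
    calc ∫ ω, exp (t * M ω) ∂μ ≤ ∫ ω, ∑ i, exp (t * X i ω) ∂μ := integral_mono hexpM hsum hexp_le
      _ = ∑ i, mgf (X i) μ t := integral_finsetSum _ fun i _ ↦ (hX i).integrable_exp_mul t
      _ ≤ ∑ _i : ι, exp (c * t ^ 2 / 2) := Finset.sum_le_sum fun i _ ↦ (hX i).mgf_le t
      _ = Fintype.card ι * exp (c / 2 * t ^ 2) := by simp [mul_div_right_comm]
  have := log_le_log (exp_pos _) (hjensen.trans hmgf)
  rwa [log_exp, log_mul (by positivity) (exp_pos _).ne', log_exp] at this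

theorem integral_sup'_le_of_hasSubgaussianMGF [Nonempty ι]
    (hX : ∀ i, HasSubgaussianMGF (X i) c μ) :
    ∫ ω, Finset.univ.sup' Finset.univ_nonempty (X · ω) ∂μ
      ≤ √(2 * c * log (Fintype.card ι)) := by
  have hK : 0 ≤ log (Fintype.card ι) := log_natCast_nonneg _
  calc _ ≤ √(4 * log (Fintype.card ι) * (c / 2)) := le_sqrt_of_forall_mul_le hK (by positivity)
        fun t _ ↦ mul_integral_sup'_le_of_hasSubgaussianMGF hX t
    _ = √(2 * c * log (Fintype.card ι)) := by ring_nf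

theorem integral_comp_le_of_hasSubgaussianMGF (hX : ∀ i, HasSubgaussianMGF (X i) c μ)
    (J : Ω → ι) : ∫ ω, X (J ω) ω ∂μ ≤ √(2 * c * log (Fintype.card ι)) := by
  by_cases hint : Integrable (fun ω ↦ X (J ω) ω) μ
  · have : Nonempty ι := ⟨J (nonempty_of_isProbabilityMeasure μ).some⟩
    calc ∫ ω, X (J ω) ω ∂μ ≤ ∫ ω, Finset.univ.sup' Finset.univ_nonempty (X · ω) ∂μ :=
          integral_mono hint (integrable_finset_sup' _ fun i _ ↦ (hX i).integrable)
            fun ω ↦ Finset.le_sup' (X · ω) (Finset.mem_univ (J ω))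
      _ ≤ _ := integral_sup'_le_of_hasSubgaussianMGF hX
  · -- the Bochner integral of a non-integrable function is `0`
    rw [integral_undef hint]
    exact sqrt_nonneg _

theorem abs_integral_comp_le_of_hasSubgaussianMGF (hX : ∀ i, HasSubgaussianMGF (X i) c μ)
    (J : Ω → ι) : |∫ ω, X (J ω) ω ∂μ| ≤ √(2 * c * log (Fintype.card ι)) := by
  refine abs_le.2 ⟨?_, integral_comp_le_of_hasSubgaussianMGF hX J⟩
  have := integral_comp_le_of_hasSubgaussianMGF (fun i ↦ (hX i).neg) J
  simp only [Pi.neg_apply, integral_neg] at this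
  linarith

end

theorem reasoning_generalization_bound_general
    {Ω : Type*} [MeasurableSpace Ω] (ℙ : Measure Ω) [IsProbabilityMeasure ℙ]
    {Z : Type*} [Fintype Z] [MeasurableSpace Z] [MeasurableSingletonClass Z]
    {𝒜 : Type*} [Fintype 𝒜]
    (m : ℕ)
    (μ : Measure Z) [IsProbabilityMeasure μ]
    (n : ℕ) (hn : 0 < n)
    (S : Ω → (Fin n → Z)) (hS : Measurable S)
    (hlaw : Measure.map S ℙ = Measure.pi fun _ : Fin n => μ)
    (W : Ω → (Fin m → 𝒜))
    (ℓ : (Fin m → 𝒜) → Z → ℝ) (Cmax : ℝ)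
    (hℓ : ∀ w z, ℓ w z ∈ Set.Icc (0 : ℝ) Cmax) :
    |∫ ω, ((∫ z, ℓ (W ω) z ∂μ) - (1 / n) * ∑ i, ℓ (W ω) (S ω i)) ∂ℙ| ≤
      Real.sqrt (Cmax ^ 2 * (m * Real.log (Fintype.card 𝒜)) / (2 * n)) := by
  have hgen : ∀ w, ProbabilityTheory.HasSubgaussianMGF
      (fun ω ↦ (∫ z, ℓ w z ∂μ) - (1 / n) * ∑ i, ℓ w (S ω i)) ((‖Cmax - 0‖₊ / 2) ^ 2 / n) ℙ :=
    fun w ↦ by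
      have hsample := hasSubgaussianMGF_integral_sub_empiricalMean hn
        (measurable_of_finite (ℓ w)).aemeasurable (ae_of_all μ (hℓ w))
      rw [← hlaw] at hsample
      exact (hsample.of_map hS.aemeasurable :)
  calc _ ≤ √(2 * ((‖Cmax - 0‖₊ / 2) ^ 2 / n : NNReal) * Real.log (Fintype.card (Fin m → 𝒜))) :=
        abs_integral_comp_le_of_hasSubgaussianMGF hgen W
    _ = _ := by
      rw [sub_zero, Fintype.card_fun, Fintype.card_fin, Nat.cast_pow, Real.log_pow]
      push_cast
      rw [Real.norm_eq_abs, div_pow, sq_abs]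
      congr 1
      field_simp

/-- **Information-theoretic generalization upper bound for LLM reasoning.**
For a policy whose output `W` is a chain-of-thought of `m` tokens over a finite
dictionary `𝒜`, trained on an i.i.d. sample `S ~ μ^n` of `n` queries from a
finite query space, with reasoning loss `ℓ` bounded in `[0, C_max]`, the
expected reasoning generalization error satisfies
`|E[R(W) − R̂_n(W)]| ≤ sqrt(C_max² · m · log|𝒜| / (2n))`. -/
theorem reasoning_generalization_bound
    {Ω : Type*} [MeasurableSpace Ω] (ℙ : Measure Ω) [IsProbabilityMeasure ℙ]
    {Z : Type*} [Fintype Z] [MeasurableSpace Z] [MeasurableSingletonClass Z]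
    {𝒜 : Type*} [Fintype 𝒜] [MeasurableSpace 𝒜] [MeasurableSingletonClass 𝒜]
    (m : ℕ) (hm : 0 < m)
    (μ : Measure Z) [IsProbabilityMeasure μ]
    (n : ℕ) (hn : 0 < n)
    (S : Ω → (Fin n → Z)) (hS : Measurable S)
    (hlaw : Measure.map S ℙ = Measure.pi fun _ : Fin n => μ)
    (W : Ω → (Fin m → 𝒜)) (hW : Measurable W)
    (ℓ : (Fin m → 𝒜) → Z → ℝ) (Cmax : ℝ)
    (hℓ : ∀ w z, ℓ w z ∈ Set.Icc (0 : ℝ) Cmax) :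
    |∫ ω, ((∫ z, ℓ (W ω) z ∂μ) - (1 / n) * ∑ i, ℓ (W ω) (S ω i)) ∂ℙ| ≤
      Real.sqrt (Cmax ^ 2 * (m * Real.log (Fintype.card 𝒜)) / (2 * n)) :=
  reasoning_generalization_bound_general ℙ m μ n hn S hS hlaw W ℓ Cmax hℓ
end
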